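/- arXiv:2506.15074 — 3 statements merged into one kernel-verified Lean document; each statement's English description precedes it below -/
import Mathlib

section
/- The battery capacity functional is Schur-convex in the eigenvalue vector: if λ and μ are probability vectors sorted ascending with λ ≺ μ (λ majorized by μ), and ε_0 ≤ ... ≤ ε_{d-1}, then Σ_i ε_i(λ_i - λ_{d-1-i}) ≤ Σ_i ε_i(μ_i - μ_{d-1-i}). -/
/-- Ascending rearrangement of a finite real tuple. -/
noncomputable def sortAsc {n : ℕ} (f : Fin n → ℝ) : Fin n → ℝ := f ∘ Tuple.sort f

/-- Descending rearrangement. -/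
noncomputable def sortDesc {n : ℕ} (f : Fin n → ℝ) : Fin n → ℝ := fun i => sortAsc f i.rev

/-- Sum of the `k` largest entries of `f`. -/
noncomputable def topSum {n : ℕ} (f : Fin n → ℝ) (k : ℕ) : ℝ :=
  ∑ i ∈ Finset.univ.filter (fun i : Fin n => (i : ℕ) < k), sortDesc f i

/-- `Majorizes q p` means `p ≺ q`. -/
def Majorizes {n : ℕ} (q p : Fin n → ℝ) : Prop :=
  (∀ k, topSum p k ≤ topSum q k) ∧ (∑ i, p i = ∑ i, q i)

/-- Battery capacity from eigenvalue vector `lam` and energy levels `eps`. -/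
noncomputable def capacityVec {n : ℕ} (lam eps : Fin n → ℝ) : ℝ :=
  ∑ i, sortAsc eps i * (sortAsc lam i - sortAsc lam i.rev)

lemma sortAsc_of_monotone {n : ℕ} {f : Fin n → ℝ} (hf : Monotone f) : sortAsc f = f := by
  unfold sortAsc
  rw [Tuple.sort_eq_refl_iff_monotone.2 hf]
  rfl

/-- extended descending version of `f` -/
noncomputable def descExt {n : ℕ} (f : Fin n → ℝ) (j : ℕ) : ℝ :=
  if h : j < n then f (Fin.rev ⟨j, h⟩) else 0

lemma topSum_eq_range {n : ℕ} {f : Fin n → ℝ} (hf : Monotone f) {k : ℕ} (hk : k ≤ n) :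
    topSum f k = ∑ j ∈ Finset.range k, descExt f j := by
  unfold topSum
  have hsd : ∀ i : Fin n, sortDesc f i = descExt f (i : ℕ) := by
    intro i
    simp [sortDesc, descExt, sortAsc_of_monotone hf, i.isLt]
  rw [Finset.sum_filter]
  simp_rw [hsd]
  rw [Fin.sum_univ_eq_sum_range (fun j => if j < k then descExt f j else 0) n]
  rw [← Finset.sum_filter]
  congr 1
  ext j
  simp only [Finset.mem_filter, Finset.mem_range]
  constructor
  · rintro ⟨_, h⟩; exact h
  · intro h; exact ⟨lt_of_lt_of_le h hk, h⟩

lemma sum_eq_c_sum {d : ℕ} (eps x : Fin d → ℝ) :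
    ∑ i, eps i * (x i - x i.rev) = ∑ i, (eps i - eps i.rev) * x i := by
  have h : ∑ i, eps i * x i.rev = ∑ i, eps i.rev * x i := by
    rw [← Equiv.sum_comp Fin.revPerm (fun i => eps i * x i.rev)]
    simp [Fin.revPerm]
  simp_rw [mul_sub, sub_mul, Finset.sum_sub_distrib, h]

/-- Schur-convexity of the capacity in the eigenvalue vector. -/
theorem stmt_4 {d : ℕ} (lam mu eps : Fin d → ℝ)
    (hlam : Monotone lam) (hmu : Monotone mu) (heps : Monotone eps)
    (hlam0 : ∀ i, 0 ≤ lam i) (hmu0 : ∀ i, 0 ≤ mu i)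
    (hlam1 : ∑ i, lam i = 1) (hmu1 : ∑ i, mu i = 1)
    (hmaj : Majorizes mu lam) :
    ∑ i, eps i * (lam i - lam i.rev) ≤ ∑ i, eps i * (mu i - mu i.rev) := by
  set c : Fin d → ℝ := fun i => eps i - eps i.rev with hc
  have hcmono : Monotone c := by
    intro i j hij
    have h1 : eps i ≤ eps j := heps hij
    have h2 : eps j.rev ≤ eps i.rev := heps (Fin.rev_le_rev.2 hij)
    simp only [hc]; linarith
  rw [sum_eq_c_sum, sum_eq_c_sum]
  -- B j = c (rev j) extended
  set B : ℕ → ℝ := descExt c with hB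
  have key : ∀ x : Fin d → ℝ, Monotone x →
      ∑ i, c i * x i = ∑ j ∈ Finset.range d, B j * descExt x j := by
    intro x hx
    rw [← Equiv.sum_comp Fin.revPerm (fun i => c i * x i)]
    rw [← Fin.sum_univ_eq_sum_range (fun j => B j * descExt x j) d]
    apply Finset.sum_congr rfl
    intro j hj
    have hjd : (j : ℕ) < d := j.isLt
    simp [hB, descExt, hjd, Fin.revPerm]
  rw [key lam hlam, key mu hmu]
  -- Abel summation
  have habel : ∀ x : Fin d → ℝ,
      ∑ j ∈ Finset.range d, B j * descExt x j =
        B (d - 1) * (∑ j ∈ Finset.range d, descExt x j) -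
          ∑ i ∈ Finset.range (d - 1),
            (B (i + 1) - B i) * (∑ j ∈ Finset.range (i + 1), descExt x j) := by
    intro x
    have := Finset.sum_range_by_parts B (descExt x) d
    simpa [smul_eq_mul] using this
  rw [habel lam, habel mu]
  -- total sums are equal
  have htot : ∀ x : Fin d → ℝ, Monotone x →
      ∑ j ∈ Finset.range d, descExt x j = ∑ i, x i := by
    intro x hx
    rw [← topSum_eq_range hx le_rfl]
    unfold topSum
    have : Finset.univ.filter (fun i : Fin d => (i : ℕ) < d) = Finset.univ := by
      ext i; simp [i.isLt]
    rw [this]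
    have hsd : ∀ i : Fin d, sortDesc x i = x i.rev := by
      intro i; simp [sortDesc, sortAsc_of_monotone hx]
    simp_rw [hsd]
    exact Equiv.sum_comp Fin.revPerm x
  rw [htot lam hlam, htot mu hmu, hlam1, hmu1]
  -- compare the correction sums
  apply sub_le_sub_left
  apply Finset.sum_le_sum
  intro i hi
  have hi' : i + 1 < d := by
    have := Finset.mem_range.1 hi; omega
  have hBdec : B (i + 1) - B i ≤ 0 := by
    have hid : i < d := by omega
    have : c (Fin.rev ⟨i + 1, hi'⟩) ≤ c (Fin.rev ⟨i, hid⟩) := by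
      apply hcmono
      rw [Fin.rev_le_rev]
      exact Fin.mk_le_mk.2 (Nat.le_succ i)
    simp only [hB, descExt, hi', hid, dif_pos]
    linarith
  have hT : ∑ j ∈ Finset.range (i + 1), descExt lam j ≤
      ∑ j ∈ Finset.range (i + 1), descExt mu j := by
    rw [← topSum_eq_range hlam (by omega), ← topSum_eq_range hmu (by omega)]
    exact hmaj.1 (i + 1)
  exact mul_le_mul_of_nonpos_left hT hBdec
end

section
/- Let N₁, N₂ be descending-sorted n-tuples summing to 1 with N₂ ≺ N₁, and let Φ be any permutation of {1,...,n}. Then the vector with entries p·λ_i^1 + (1-p)·λ_{Φ(i)}^2 is majorized by the vector with entries p·λ_i^1 + (1-p)·λ_i^2 (the sorted addition), which in turn is majorized by N₁. -/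
lemma sortDesc_of_antitone {n : ℕ} {f : Fin n → ℝ} (hf : Antitone f) : sortDesc f = f := by
  have hm : Monotone (f ∘ (Fin.revPerm : Equiv.Perm (Fin n))) := by
    intro a b hab
    exact hf (Fin.rev_le_rev.mpr hab)
  have h := (Tuple.comp_sort_eq_comp_iff_monotone (f := f) (σ := Fin.revPerm)).mpr hm
  funext i
  have h2 := congrFun h.symm i.rev
  simp only [Function.comp_apply, Fin.revPerm_apply, Fin.rev_rev] at h2
  simpa [sortDesc, sortAsc] using h2

lemma topSum_of_antitone {n : ℕ} {f : Fin n → ℝ} (hf : Antitone f) (k : ℕ) :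
    topSum f k = ∑ i ∈ Finset.univ.filter (fun i : Fin n => (i : ℕ) < k), f i := by
  simp [topSum, sortDesc_of_antitone hf]

lemma strictMono_nat_le {m n : ℕ} (g : Fin m → Fin n) (hg : StrictMono g) :
    ∀ j (hj : j < m), j ≤ (g ⟨j, hj⟩ : ℕ) := by
  intro j
  induction j with
  | zero => intro hj; exact Nat.zero_le _
  | succ j ih =>
    intro hj
    have h1 := ih (Nat.lt_of_succ_lt hj)
    have h2 : g ⟨j, Nat.lt_of_succ_lt hj⟩ < g ⟨j + 1, hj⟩ := hg (by simp [Fin.lt_def])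
    have := Fin.lt_def.mp h2
    omega

lemma sum_le_sum_first {n : ℕ} {f : Fin n → ℝ} (hf : Antitone f) (s : Finset (Fin n)) :
    ∑ i ∈ s, f i ≤ ∑ i ∈ Finset.univ.filter (fun i : Fin n => (i : ℕ) < s.card), f i := by
  set m := s.card with hm
  have hmn : m ≤ n := by
    simpa using (Finset.card_le_univ s)
  set g := s.orderEmbOfFin hm.symm with hg
  have hmap : Finset.univ.map g.toEmbedding = s := by
    apply Finset.eq_of_subset_of_card_le
    · intro x hx
      obtain ⟨j, _, rfl⟩ := Finset.mem_map.mp hx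
      exact s.orderEmbOfFin_mem hm.symm j
    · simp [← hm]
  have hleft : ∑ i ∈ s, f i = ∑ j : Fin m, f (g j) := by
    rw [← hmap, Finset.sum_map]
    rfl
  have hright : ∑ i ∈ Finset.univ.filter (fun i : Fin n => (i : ℕ) < m), f i
      = ∑ j : Fin m, f (Fin.castLE hmn j) := by
    have hmap2 : Finset.univ.map (Fin.castLEEmb hmn)
        = Finset.univ.filter (fun i : Fin n => (i : ℕ) < m) := by
      ext i
      simp only [Finset.mem_map, Finset.mem_univ, true_and, Finset.mem_filter,
        Fin.castLEEmb_apply]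
      constructor
      · rintro ⟨j, _, rfl⟩; exact j.isLt
      · intro h; exact ⟨⟨(i : ℕ), h⟩, rfl⟩
    rw [← hmap2, Finset.sum_map]
    rfl
  rw [hleft, hright]
  apply Finset.sum_le_sum
  intro j _
  apply hf
  rw [Fin.le_def]
  simpa using strictMono_nat_le (fun i => g i) g.strictMono j j.isLt

lemma topSum_achieved {n : ℕ} (f : Fin n → ℝ) (k : ℕ) :
    ∃ s : Finset (Fin n), s.card = min k n ∧ topSum f k = ∑ i ∈ s, f i := by
  set t := Finset.univ.filter (fun i : Fin n => (i : ℕ) < k) with ht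
  have hinj : Set.InjOn (fun i : Fin n => Tuple.sort f i.rev) t := by
    intro a _ b _ hab
    simp only at hab
    have := (Tuple.sort f).injective hab
    exact Fin.rev_injective this
  refine ⟨t.image (fun i => Tuple.sort f i.rev), ?_, ?_⟩
  · rw [Finset.card_image_of_injOn hinj]
    have : t.map Fin.valEmbedding = Finset.range (min k n) := by
      ext j
      simp only [Finset.mem_map, Finset.mem_filter, Finset.mem_univ, true_and,
        Fin.valEmbedding_apply, Finset.mem_range, Nat.lt_min, ht]
      constructor
      · rintro ⟨i, hi, rfl⟩; exact ⟨hi, i.isLt⟩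
      · rintro ⟨h1, h2⟩; exact ⟨⟨j, h2⟩, h1, rfl⟩
    have := congrArg Finset.card this
    simpa using this
  · rw [Finset.sum_image (fun a ha b hb h => hinj ha hb h)]
    rfl

/-- disordered addition is majorized by sorted addition,
which in turn is majorized by `N₁`. -/
theorem stmt_7 {n : ℕ} (N1 N2 : Fin n → ℝ)
    (h1d : Antitone N1) (h2d : Antitone N2)
    (h1nn : ∀ i, 0 ≤ N1 i) (h2nn : ∀ i, 0 ≤ N2 i)
    (h1s : ∑ i, N1 i = 1) (h2s : ∑ i, N2 i = 1)
    (hmaj : Majorizes N1 N2)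
    (p : ℝ) (hp : p ∈ Set.Icc (0 : ℝ) 1)
    (Φ : Equiv.Perm (Fin n)) :
    Majorizes (fun i => p * N1 i + (1 - p) * N2 i)
        (fun i => p * N1 i + (1 - p) * N2 (Φ i))
    ∧ Majorizes N1 (fun i => p * N1 i + (1 - p) * N2 i) := by
  obtain ⟨hp0, hp1⟩ := hp
  have hp1' : 0 ≤ 1 - p := by linarith
  set q : Fin n → ℝ := fun i => p * N1 i + (1 - p) * N2 i with hq
  have hq_anti : Antitone q := fun a b hab => by
    have := h1d hab; have := h2d hab
    show p * N1 b + (1 - p) * N2 b ≤ p * N1 a + (1 - p) * N2 a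
    nlinarith
  have hqtop : ∀ k, topSum q k
      = p * (∑ i ∈ Finset.univ.filter (fun i : Fin n => (i : ℕ) < k), N1 i)
      + (1 - p) * (∑ i ∈ Finset.univ.filter (fun i : Fin n => (i : ℕ) < k), N2 i) := by
    intro k
    rw [topSum_of_antitone hq_anti]
    simp [hq, Finset.sum_add_distrib, Finset.mul_sum]
  have hN1top : ∀ k, topSum N1 k
      = ∑ i ∈ Finset.univ.filter (fun i : Fin n => (i : ℕ) < k), N1 i :=
    topSum_of_antitone h1d
  have hN2top : ∀ k, topSum N2 k
      = ∑ i ∈ Finset.univ.filter (fun i : Fin n => (i : ℕ) < k), N2 i :=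
    topSum_of_antitone h2d
  have hqsum : ∑ i, q i = 1 := by
    simp [hq, Finset.sum_add_distrib, ← Finset.mul_sum, h1s, h2s]
  constructor
  · constructor
    · intro k
      obtain ⟨s, hcard, heq⟩ := topSum_achieved (fun i => p * N1 i + (1 - p) * N2 (Φ i)) k
      rw [heq]
      have hfilter_eq : Finset.univ.filter (fun i : Fin n => (i : ℕ) < min k n)
          = Finset.univ.filter (fun i : Fin n => (i : ℕ) < k) := by
        ext i
        simp only [Finset.mem_filter, Finset.mem_univ, true_and]
        have := i.isLt
        omega
      have h1le : ∑ i ∈ s, N1 i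
          ≤ ∑ i ∈ Finset.univ.filter (fun i : Fin n => (i : ℕ) < k), N1 i := by
        have := sum_le_sum_first h1d s
        rwa [hcard, hfilter_eq] at this
      have h2le : ∑ i ∈ s, N2 (Φ i)
          ≤ ∑ i ∈ Finset.univ.filter (fun i : Fin n => (i : ℕ) < k), N2 i := by
        have himg : ∑ j ∈ s.image Φ, N2 j = ∑ i ∈ s, N2 (Φ i) :=
          Finset.sum_image (fun a _ b _ h => Φ.injective h)
        rw [← himg]
        have := sum_le_sum_first h2d (s.image Φ)
        rwa [Finset.card_image_of_injective _ Φ.injective, hcard, hfilter_eq] at this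
      have : ∑ i ∈ s, (p * N1 i + (1 - p) * N2 (Φ i))
          = p * (∑ i ∈ s, N1 i) + (1 - p) * (∑ i ∈ s, N2 (Φ i)) := by
        simp [Finset.sum_add_distrib, Finset.mul_sum]
      rw [this, hqtop k]
      have := mul_le_mul_of_nonneg_left h1le hp0
      have := mul_le_mul_of_nonneg_left h2le hp1'
      linarith
    · have : ∑ i, N2 (Φ i) = ∑ i, N2 i := Equiv.sum_comp Φ N2
      simp only [hqsum]
      calc ∑ i, (p * N1 i + (1 - p) * N2 (Φ i))
          = p * (∑ i, N1 i) + (1 - p) * (∑ i, N2 (Φ i)) := by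
            simp [Finset.sum_add_distrib, Finset.mul_sum]
        _ = 1 := by rw [this, h1s, h2s]; ring
  · constructor
    · intro k
      rw [hqtop k, ← hN1top k, ← hN2top k]
      have := hmaj.1 k
      nlinarith
    · rw [hqsum, h1s]
end

section
/- Let ρ be a probability vector (diagonal density matrix eigenvalues) and let ρ' be obtained from ρ by a measurement that sets all but m of the n nonzero eigenvalue positions to zero and renormalizes: ρ'_i = ρ_i / Σ_{j∈S} ρ_j for i in a subset S of size m containing the m largest entries of ρ, ρ'_i = 0 otherwise. Then ρ ≺ ρ'. -/
open ComplexOrder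

/-!
For a nonnegative vector the top-`k` sum is the largest sum of at most `k` entries, and it is
attained. Both facts, and the main step, rest on one exchange inequality: if every entry on `s`
is below every entry on `t` and `#s ≤ #t`, then `∑ s ≤ ∑ t`. When `k > m`, the top-`k` sum of
`ρ'` is its total mass `1`. Otherwise the exchange inequality moves the `k` largest entries of
`ρ` into `S` without losing mass, and on `S` dividing by a mass `≤ 1` only increases entries.
-/

namespace Finset

variable {ι : Type*}

theorem sum_le_sum_of_card_le_of_forall_le {s t : Finset ι} {f : ι → ℝ} (hst : #s ≤ #t)
    (ht : ∀ j ∈ t, 0 ≤ f j) (hf : ∀ i ∈ s, ∀ j ∈ t, f i ≤ f j) :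
    ∑ i ∈ s, f i ≤ ∑ j ∈ t, f j := by
  rcases t.eq_empty_or_nonempty with rfl | htne
  · rw [card_eq_zero.1 (Nat.le_zero.1 hst)]
  -- `t.inf' htne f` separates the values on `s` from those on `t`
  have hc : 0 ≤ t.inf' htne f := (le_inf'_iff htne f).2 ht
  calc ∑ i ∈ s, f i ≤ #s • t.inf' htne f :=
        sum_le_card_nsmul s f _ fun i hi => le_inf' htne f (hf i hi)
    _ ≤ #t • t.inf' htne f := nsmul_le_nsmul_left hc hst
    _ ≤ ∑ j ∈ t, f j := card_nsmul_le_sum t f _ fun j hj => inf'_le f hj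

theorem exists_subset_card_eq_sum_le [DecidableEq ι] {A S : Finset ι} {f : ι → ℝ}
    (hnn : ∀ i, 0 ≤ f i) (hS : ∀ i ∈ S, ∀ j ∉ S, f j ≤ f i) (hAS : #A ≤ #S) :
    ∃ B ⊆ S, #B = #A ∧ ∑ i ∈ A, f i ≤ ∑ i ∈ B, f i := by
  obtain ⟨B, hAB, hBS, hB⟩ :=
    exists_subsuperset_card_eq inter_subset_right (card_le_card inter_subset_left) hAS
  refine ⟨B, hBS, hB, sum_sdiff_le_sum_sdiff.1 ?_⟩
  refine sum_le_sum_of_card_le_of_forall_le (card_sdiff_comm hB.symm).le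
    (fun j _ => hnn j) fun i hi j hj => hS j (hBS (mem_sdiff.1 hj).1) i fun hiS => ?_
  exact (mem_sdiff.1 hi).2 (hAB (mem_inter.2 ⟨(mem_sdiff.1 hi).1, hiS⟩))

end Finset

open Finset

theorem Fin.sum_le_sum_filter_val_lt_of_antitone {n k : ℕ} {g : Fin n → ℝ} (hg : Antitone g)
    (hnn : ∀ i, 0 ≤ g i) {B : Finset (Fin n)} (hB : #B ≤ k) :
    ∑ i ∈ B, g i ≤ ∑ i ∈ univ.filter (fun i : Fin n => (i : ℕ) < k), g i := by
  refine sum_sdiff_le_sum_sdiff.1 (sum_le_sum_of_card_le_of_forall_le ?_ (fun j _ => hnn j) ?_)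
  · refine card_sdiff_le_card_sdiff_iff.2 ?_
    rw [Fin.card_filter_val_lt]
    exact le_min (card_le_univ B |>.trans_eq (Fintype.card_fin n)) hB
  · intro i hi j hj
    simp only [mem_sdiff, mem_filter, mem_univ, true_and, not_lt] at hi hj
    exact hg (Fin.le_def.2 (hj.1.le.trans hi.2))

theorem sortDesc_eq_comp {n : ℕ} (f : Fin n → ℝ) :
    sortDesc f = f ∘ Fin.revPerm.trans (Tuple.sort f) := rfl

theorem sortDesc_antitone {n : ℕ} (f : Fin n → ℝ) : Antitone (sortDesc f) :=
  fun _ _ hij => Tuple.monotone_sort f (Fin.rev_le_rev.2 hij)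

theorem sum_le_topSum {n k : ℕ} {f : Fin n → ℝ} (hnn : ∀ i, 0 ≤ f i) {B : Finset (Fin n)}
    (hB : #B ≤ k) : ∑ i ∈ B, f i ≤ topSum f k := by
  calc ∑ i ∈ B, f i
        = ∑ i ∈ B.map (Fin.revPerm.trans (Tuple.sort f)).symm.toEmbedding, sortDesc f i := by
        rw [sum_map, sortDesc_eq_comp]
        simp only [Function.comp_apply, Equiv.toEmbedding_apply, Equiv.apply_symm_apply]
    _ ≤ topSum f k :=
        Fin.sum_le_sum_filter_val_lt_of_antitone (sortDesc_antitone f) (fun i => hnn _)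
          (by rwa [card_map])

theorem exists_card_eq_topSum {n : ℕ} (f : Fin n → ℝ) (k : ℕ) :
    ∃ A : Finset (Fin n), #A = min n k ∧ topSum f k = ∑ i ∈ A, f i :=
  ⟨(univ.filter fun i : Fin n => (i : ℕ) < k).map (Fin.revPerm.trans (Tuple.sort f)).toEmbedding,
    by rw [card_map, Fin.card_filter_val_lt], by rw [sum_map]; rfl⟩

/-- keeping the `m` largest entries of a probability vector and
renormalizing yields a vector that majorizes the original. -/
theorem stmt_13 {n : ℕ} (ρ : Fin n → ℝ)
    (hnn : ∀ i, 0 ≤ ρ i) (hsum : ∑ i, ρ i = 1)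
    (m : ℕ) (S : Finset (Fin n)) (hcard : S.card = m)
    (hS : ∀ i ∈ S, ∀ j ∉ S, ρ j ≤ ρ i)
    (hpos : 0 < ∑ j ∈ S, ρ j)
    (ρ' : Fin n → ℝ)
    (hρ' : ρ' = fun i => if i ∈ S then ρ i / ∑ j ∈ S, ρ j else 0) :
    Majorizes ρ' ρ := by
  have hρ'i (i : Fin n) : ρ' i = if i ∈ S then ρ i / ∑ j ∈ S, ρ j else 0 := congrFun hρ' i
  have hmass : ∑ j ∈ S, ρ j ≤ 1 :=
    hsum ▸ sum_le_sum_of_subset_of_nonneg (subset_univ S) fun i _ _ => hnn i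
  have hnn' : ∀ i, 0 ≤ ρ' i := fun i => by
    rw [hρ'i]; split_ifs
    exacts [div_nonneg (hnn i) hpos.le, le_rfl]
  have hle : ∀ i ∈ S, ρ i ≤ ρ' i := fun i hi => by
    rw [hρ'i, if_pos hi]; exact le_div_self (hnn i) hpos hmass
  have hsum' : ∑ i, ρ' i = 1 := by
    rw [hρ', sum_ite_mem, univ_inter, ← sum_div, div_self hpos.ne']
  refine ⟨fun k => ?_, by rw [hsum, hsum']⟩
  obtain ⟨A, hA, hAk⟩ := exists_card_eq_topSum ρ k
  rcases le_or_gt (min n k) m with hkm | hmk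
  · obtain ⟨B, hBS, hB, hAB⟩ :=
      exists_subset_card_eq_sum_le hnn hS (hA.trans_le (hkm.trans_eq hcard.symm))
    calc topSum ρ k = ∑ i ∈ A, ρ i := hAk
      _ ≤ ∑ i ∈ B, ρ i := hAB
      _ ≤ ∑ i ∈ B, ρ' i := sum_le_sum fun i hi => hle i (hBS hi)
      _ ≤ topSum ρ' k := sum_le_topSum hnn' (hB.trans hA ▸ min_le_right n k)
  · calc topSum ρ k = ∑ i ∈ A, ρ i := hAk
      _ ≤ ∑ i, ρ i := sum_le_sum_of_subset_of_nonneg (subset_univ A) fun i _ _ => hnn i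
      _ = ∑ i ∈ S, ρ' i := by
        rw [hsum, ← hsum', sum_subset (subset_univ S) fun i _ hi => by rw [hρ'i, if_neg hi]]
      _ ≤ topSum ρ' k := sum_le_topSum hnn' (hcard ▸ (hmk.trans_le (min_le_right n k)).le)
end
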